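/- If a_τ ≠ 0, then ρ(τ_cp) − ρ(−τ_Δ) = −(a_τ·Δ − ‖a‖·(aᵀg))² / (2‖a‖²·(1 + Δ‖a‖)²·aᵀBa). In particular, if moreover a_τ·Δ ≠ ‖a‖·(aᵀg), then ρ(τ_cp) < ρ(−τ_Δ). -/

import Mathlib

/-!
Write `s = ‖a‖`, `q = aᵀg`, `b = aᵀBa > 0`, so that `a_τ = b - s²q`. At the Cauchy point
`1 - τ_cp s² = b / a_τ`, which collapses `ρ(τ_cp)` to `-q² / (2b)`; at the boundary step
`1 + τ_Δ s² = 1 + Δs`. Subtracting the two closed forms and clearing denominators leaves a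
negative multiple of the perfect square `(a_τ Δ - s q)²`.
-/

open scoped RealInnerProductSpace

/-- `ρ(τ)` in the scalars `s = ‖a‖`, `q = aᵀg`, `b = aᵀBa`. -/
noncomputable def stepModel (s q b τ : ℝ) : ℝ :=
  τ * q / (1 - τ * s ^ 2) + τ ^ 2 * b / (2 * (1 - τ * s ^ 2) ^ 2)

section StepModel

variable {s q b Δ : ℝ}

theorem one_sub_cauchyStep_mul (h : b - s ^ 2 * q ≠ 0) :
    1 - -q / (b - s ^ 2 * q) * s ^ 2 = b / (b - s ^ 2 * q) := by
  rw [div_mul_eq_mul_div, one_sub_div h]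
  ring

theorem one_sub_boundaryStep_mul : 1 - -(Δ / s) * s ^ 2 = 1 + Δ * s := by
  field_simp
  ring

theorem stepModel_cauchyStep (hb : b ≠ 0) (h : b - s ^ 2 * q ≠ 0) :
    stepModel s q b (-q / (b - s ^ 2 * q)) = -q ^ 2 / (2 * b) := by
  rw [stepModel, one_sub_cauchyStep_mul h]
  generalize b - s ^ 2 * q = c at h ⊢
  field_simp
  ring

theorem stepModel_cauchyStep_sub_boundaryStep (hs : s ≠ 0) (hΔ : 1 + Δ * s ≠ 0) (hb : b ≠ 0)
    (h : b - s ^ 2 * q ≠ 0) :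
    stepModel s q b (-q / (b - s ^ 2 * q)) - stepModel s q b (-(Δ / s))
      = -((b - s ^ 2 * q) * Δ - s * q) ^ 2 / (2 * s ^ 2 * (1 + Δ * s) ^ 2 * b) := by
  rw [stepModel_cauchyStep hb h, stepModel, one_sub_boundaryStep_mul]
  field_simp
  ring

theorem stepModel_cauchyStep_lt_boundaryStep (hs : s ≠ 0) (hΔ : 1 + Δ * s ≠ 0) (hb : 0 < b)
    (h : b - s ^ 2 * q ≠ 0) (hne : (b - s ^ 2 * q) * Δ ≠ s * q) :
    stepModel s q b (-q / (b - s ^ 2 * q)) < stepModel s q b (-(Δ / s)) := by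
  have hgap : -((b - s ^ 2 * q) * Δ - s * q) ^ 2 / (2 * s ^ 2 * (1 + Δ * s) ^ 2 * b) < 0 :=
    div_neg_of_neg_of_pos (neg_neg_of_pos (pow_two_pos_of_ne_zero (sub_ne_zero.mpr hne)))
      (by positivity)
  linarith [stepModel_cauchyStep_sub_boundaryStep hs hΔ hb.ne' h]

end StepModel

theorem Matrix.PosDef.inner_toEuclideanLin_pos {ι : Type*} [Fintype ι] [DecidableEq ι]
    {B : Matrix ι ι ℝ} (hB : B.PosDef) {x : EuclideanSpace ℝ ι} (hx : x ≠ 0) :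
    0 < ⟪x, B.toEuclideanLin x⟫ := by
  simpa [EuclideanSpace.inner_eq_star_dotProduct, Matrix.toLpLin_apply, dotProduct_comm]
    using hB.dotProduct_mulVec_pos (x := x.ofLp) (by simpa using hx)

theorem stmt_11 {{n : ℕ}} (hn : 1 ≤ n)
    (a g : EuclideanSpace ℝ (Fin n)) (ha : a ≠ 0)
    (B : Matrix (Fin n) (Fin n) ℝ) (hBs : B.IsSymm) (hBpd : B.PosDef)
    (ρ : ℝ → ℝ)
    (hρ : ∀ τ : ℝ, τ ≠ 1 / ‖a‖ ^ 2 →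
      ρ τ = τ * ⟪a, g⟫ / (1 - τ * ‖a‖ ^ 2)
        + τ ^ 2 * ⟪a, Matrix.toEuclideanLin B a⟫ / (2 * (1 - τ * ‖a‖ ^ 2) ^ 2))
    (aτ τm : ℝ)
    (haτ : aτ = ⟪a, Matrix.toEuclideanLin B a⟫ - ‖a‖ ^ 2 * ⟪a, g⟫)
    (hτm : τm = 1 / ‖a‖ ^ 2)
    (τcp : ℝ) (hτcp : aτ ≠ 0 → τcp = -⟪a, g⟫ / aτ)
    (Δ ε₀ : ℝ) (hΔ : 0 < Δ) (hε₀ : 0 < ε₀) (hε₁ : ε₀ < 1)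
    (τΔ τd τu : ℝ) (hτΔ : τΔ = Δ / ‖a‖) (hτd : τd = (1 - ε₀) / ‖a‖ ^ 2)
    (hτu : τu = (1 + ε₀) / ‖a‖ ^ 2)
    (haτne : aτ ≠ 0) :
    ρ τcp - ρ (-τΔ)
        = -(aτ * Δ - ‖a‖ * ⟪a, g⟫) ^ 2
          / (2 * ‖a‖ ^ 2 * (1 + Δ * ‖a‖) ^ 2 * ⟪a, Matrix.toEuclideanLin B a⟫) ∧
      (aτ * Δ ≠ ‖a‖ * ⟪a, g⟫ → ρ τcp < ρ (-τΔ)) := by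
  have hs : ‖a‖ ≠ 0 := norm_ne_zero_iff.mpr ha
  have hb := hBpd.inner_toEuclideanLin_pos ha
  have hΔs : 1 + Δ * ‖a‖ ≠ 0 := by positivity
  have hρ_eq : ∀ τ, 1 - τ * ‖a‖ ^ 2 ≠ 0 → ρ τ = stepModel ‖a‖ ⟪a, g⟫ ⟪a, B.toEuclideanLin a⟫ τ :=
    fun τ hτ ↦ hρ τ fun h ↦ hτ (by rw [h, one_div_mul_cancel (pow_ne_zero 2 hs), sub_self])
  obtain rfl := hτcp haτne
  subst haτ hτΔ
  rw [hρ_eq _ (by rw [one_sub_cauchyStep_mul haτne]; exact div_ne_zero hb.ne' haτne),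
    hρ_eq _ (by rwa [one_sub_boundaryStep_mul])]
  exact ⟨stepModel_cauchyStep_sub_boundaryStep hs hΔs hb.ne' haτne,
    stepModel_cauchyStep_lt_boundaryStep hs hΔs hb haτne⟩
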